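/- arXiv:2203.03486 — 5 statements merged into one kernel-verified Lean document; each statement's English description precedes it below -/
import Mathlib

section
/- Let 𝔤 be a finite-dimensional Lie algebra over ℂ and (h,e,f) an sl2-triple in 𝔤. For every integer i ≥ 0, the adjoint map ad(e) carries the i-eigenspace 𝔤_i of ad(h) onto the (i+2)-eigenspace 𝔤_{i+2}: every y ∈ 𝔤 with ⁅h,y⁆ = (i+2)·y can be written y = ⁅e,x⁆ for some x ∈ 𝔤 with ⁅h,x⁆ = i·x. -/
open Module Set

/-- Key lemma: in a finite-dimensional complex Lie algebra with an sl2-triple, there is no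
nonzero eigenvector of `ad h` with eigenvalue of positive real part, which is an eigenvector
of `(ad e) ∘ (ad f)` with eigenvalue of nonpositive real part. -/
lemma sl2_no_bad_vector
    {L : Type*} [LieRing L] [LieAlgebra ℂ L] [FiniteDimensional ℂ L]
    {h e f : L}
    (hhe : ⁅h, e⁆ = (2 : ℂ) • e) (hef : ⁅e, f⁆ = h)
    (c lam : ℂ) (hc : 0 < c.re) (hlam : lam.re ≤ 0)
    (y : L) (hy0 : y ≠ 0) (hyh : ⁅h, y⁆ = c • y) (hyef : ⁅e, ⁅f, y⁆⁆ = lam • y) :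
    False := by
  have key : ∀ n : ℕ, ∃ (z : L) (μ : ℂ), z ≠ 0 ∧ μ.re ≤ 0 ∧
      ⁅h, z⁆ = (c + 2 * n) • z ∧ ⁅e, ⁅f, z⁆⁆ = μ • z := by
    intro n
    induction n with
    | zero => exact ⟨y, lam, hy0, hlam, by simpa using hyh, hyef⟩
    | succ n ih =>
      obtain ⟨z, μ, hz0, hμ, hzh, hzef⟩ := ih
      have hcn : 0 < (c + 2 * n).re := by
        have h0 : (0 : ℝ) ≤ 2 * n := by positivity
        have : (c + 2 * n).re = c.re + 2 * n := by
          simp [Complex.add_re, Complex.mul_re, Complex.re_ofNat, Complex.im_ofNat]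
        rw [this]; linarith
      -- FE z = (μ - (c+2n)) • z
      have hfe : ⁅f, ⁅e, z⁆⁆ = (μ - (c + 2 * n)) • z := by
        have hl : ⁅e, ⁅f, z⁆⁆ = ⁅⁅e, f⁆, z⁆ + ⁅f, ⁅e, z⁆⁆ := leibniz_lie e f z
        rw [hzef, hef, hzh] at hl
        rw [sub_smul, eq_sub_iff_add_eq, add_comm]
        exact hl.symm
      have hez0 : ⁅e, z⁆ ≠ 0 := by
        intro hez
        rw [hez, lie_zero] at hfe
        have hμc : μ - (c + 2 * n) = 0 := by
          rcases smul_eq_zero.mp hfe.symm with h' | h'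
          · exact h'
          · exact absurd h' hz0
        have : (μ - (c + 2 * n)).re = 0 := by rw [hμc]; simp
        rw [Complex.sub_re] at this
        linarith
      refine ⟨⁅e, z⁆, μ - (c + 2 * n), hez0, ?_, ?_, ?_⟩
      · rw [Complex.sub_re]; linarith
      · have hl : ⁅h, ⁅e, z⁆⁆ = ⁅⁅h, e⁆, z⁆ + ⁅e, ⁅h, z⁆⁆ := leibniz_lie h e z
        rw [hhe, hzh, smul_lie, lie_smul] at hl
        rw [hl]
        push_cast
        module
      · have : ⁅e, ⁅f, ⁅e, z⁆⁆⁆ = ⁅e, (μ - (c + 2 * n)) • z⁆ := by rw [hfe]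
        rw [lie_smul] at this
        exact this
  -- derive a contradiction: infinitely many eigenvalues of `ad h`
  have evec : ∀ n : ℕ, ∃ z : L, z ≠ 0 ∧ ⁅h, z⁆ = (c + 2 * n) • z := by
    intro n
    obtain ⟨z, μ, hz0, _, hzh, _⟩ := key n
    exact ⟨z, hz0, hzh⟩
  choose v hv0 hvh using evec
  have hinj : Function.Injective (fun n : ℕ => c + 2 * (n : ℂ)) := by
    intro a b hab
    simp only [add_right_inj] at hab
    have : (a : ℂ) = b := mul_left_cancel₀ two_ne_zero hab
    exact_mod_cast this
  have hs : (range fun n : ℕ => c + 2 * (n : ℂ)).Infinite :=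
    Set.infinite_range_of_injective hinj
  refine hs ?_
  have hli := (LieAlgebra.ad ℂ L h).eigenvectors_linearIndependent
    (range fun n : ℕ => c + 2 * (n : ℂ))
    (fun s => v (Set.mem_range.mp s.2).choose)
    (fun s => by
      have hsval := (Set.mem_range.mp s.2).choose_spec
      rw [Module.End.hasEigenvector_iff, Module.End.mem_eigenspace_iff]
      exact ⟨by rw [LieAlgebra.ad_apply, hvh, hsval], hv0 _⟩)
  exact hli.finite

/-- For an sl2-triple `(h, e, f)` in a finite-dimensional complex Lie algebra,
`ad e` maps the `i`-eigenspace of `ad h` onto the `(i+2)`-eigenspace, for all `i ≥ 0`. -/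
theorem sl2_ad_e_surjective_on_eigenspaces
    (L : Type*) [LieRing L] [LieAlgebra ℂ L] [FiniteDimensional ℂ L]
    (h e f : L) (he : e ≠ 0)
    (hhe : ⁅h, e⁆ = (2 : ℂ) • e) (hhf : ⁅h, f⁆ = (-2 : ℂ) • f) (hef : ⁅e, f⁆ = h)
    (i : ℤ) (hi : 0 ≤ i)
    (y : L) (hy : ⁅h, y⁆ = ((i + 2 : ℤ) : ℂ) • y) :
    ∃ x : L, ⁅h, x⁆ = (i : ℂ) • x ∧ ⁅e, x⁆ = y := by
  set c : ℂ := ((i + 2 : ℤ) : ℂ) with hc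
  -- the (i+2)-eigenspace of ad h
  set W : Submodule ℂ L := Module.End.eigenspace (LieAlgebra.ad ℂ L h) c with hW
  have memW : ∀ z : L, z ∈ W ↔ ⁅h, z⁆ = c • z := by
    intro z
    rw [hW, Module.End.mem_eigenspace_iff, LieAlgebra.ad_apply]
  -- weight of ⁅f, z⁆ is c - 2
  have hFwt : ∀ z : L, ⁅h, z⁆ = c • z → ⁅h, ⁅f, z⁆⁆ = (c - 2) • ⁅f, z⁆ := by
    intro z hz
    have hl : ⁅h, ⁅f, z⁆⁆ = ⁅⁅h, f⁆, z⁆ + ⁅f, ⁅h, z⁆⁆ := leibniz_lie h f z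
    rw [hhf, hz, smul_lie, lie_smul] at hl
    rw [hl, sub_smul]
    module
  -- weight of ⁅e, x⁆ is weight of x plus 2
  have hEwt : ∀ (μ : ℂ) (z : L), ⁅h, z⁆ = μ • z → ⁅h, ⁅e, z⁆⁆ = (μ + 2) • ⁅e, z⁆ := by
    intro μ z hz
    have hl : ⁅h, ⁅e, z⁆⁆ = ⁅⁅h, e⁆, z⁆ + ⁅e, ⁅h, z⁆⁆ := leibniz_lie h e z
    rw [hhe, hz, smul_lie, lie_smul] at hl
    rw [hl, add_smul]
    module
  -- the operator (ad e) ∘ (ad f) preserves W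
  have hT : ∀ z ∈ W, ((LieAlgebra.ad ℂ L e) ∘ₗ (LieAlgebra.ad ℂ L f)) z ∈ W := by
    intro z hz
    rw [memW] at hz ⊢
    simp only [LinearMap.comp_apply, LieAlgebra.ad_apply]
    have := hEwt (c - 2) ⁅f, z⁆ (hFwt z hz)
    rw [this]
    ring_nf
  set T : W →ₗ[ℂ] W := LinearMap.restrict _ hT with hTdef
  -- T is injective by the key lemma
  have hTinj : Function.Injective T := by
    rw [← LinearMap.ker_eq_bot, Submodule.eq_bot_iff]
    rintro ⟨z, hzW⟩ hz0
    have hzl : ⁅e, ⁅f, z⁆⁆ = (0 : ℂ) • z := by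
      have := congrArg (Subtype.val) hz0
      simpa [hTdef, LinearMap.restrict_apply] using this
    rw [Submodule.mk_eq_zero]
    by_contra hz
    have hcre : 0 < c.re := by
      rw [hc]
      simp only [Complex.intCast_re]
      push_cast
      have : (0:ℝ) ≤ (i:ℝ) := by exact_mod_cast hi
      linarith
    exact sl2_no_bad_vector hhe hef c 0 hcre (by norm_num) z hz ((memW z).mp hzW) hzl
  have hTsurj : Function.Surjective T := LinearMap.injective_iff_surjective.mp hTinj
  obtain ⟨z, hz⟩ := hTsurj ⟨y, (memW y).mpr hy⟩
  refine ⟨⁅f, (z : L)⁆, ?_, ?_⟩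
  · have := hFwt (z : L) ((memW _).mp z.2)
    rw [this]
    congr 1
    rw [hc]
    push_cast
    ring
  · have := congrArg (Subtype.val) hz
    simpa [hTdef, LinearMap.restrict_apply, LieAlgebra.ad_apply] using this
end

section
/- Let 𝔤 be a finite-dimensional Lie algebra over ℂ and (h,e,f) an sl2-triple in 𝔤. For every integer i ≥ 0, dim 𝔤_i = Σ_{k≥0} dim(𝔤^e ∩ 𝔤_{i+2k}); here the sum is finite, since 𝔤_j = 0 for all but finitely many integers j. -/
open Module LieAlgebra

namespace Sl2DimAux

variable {L : Type*} [LieRing L] [LieAlgebra ℂ L] [FiniteDimensional ℂ L]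

lemma no_inf_eigen {ι : Type*} [Infinite ι] (A : Module.End ℂ L)
    (μ : ι → ℂ) (hμ : Function.Injective μ) (v : ι → L)
    (hv : ∀ i, A.HasEigenvector (μ i) (v i)) : False :=
  Module.Finite.not_linearIndependent_of_infinite v
    (A.eigenvectors_linearIndependent' μ hμ v hv)

lemma int_eigen_finite (A : Module.End ℂ L) :
    {j : ℤ | A.eigenspace (j : ℂ) ≠ ⊥}.Finite := by
  by_contra hS
  have hS' : {j : ℤ | A.eigenspace (j : ℂ) ≠ ⊥}.Infinite := hS
  have : Infinite ↥{j : ℤ | A.eigenspace (j : ℂ) ≠ ⊥} := hS'.to_subtype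
  choose v hv hv0 using fun j : ↥{j : ℤ | A.eigenspace (j : ℂ) ≠ ⊥} =>
    (Submodule.ne_bot_iff _).mp j.2
  exact no_inf_eigen A (fun j : ↥{j : ℤ | A.eigenspace (j : ℂ) ≠ ⊥} => ((j : ℤ) : ℂ))
    (fun a b hab => Subtype.ext (Int.cast_injective hab)) v
    (fun j => ⟨hv j, hv0 j⟩)

variable {h e f : L}

lemma mem_V_iff {c : ℂ} {x : L} :
    x ∈ Module.End.eigenspace (ad ℂ L h) c ↔ ⁅h, x⁆ = c • x := by
  rw [Module.End.mem_eigenspace_iff, ad_apply]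

lemma lie_e_mem (hhe : ⁅h, e⁆ = (2 : ℂ) • e) {c : ℂ} {x : L}
    (hx : x ∈ Module.End.eigenspace (ad ℂ L h) c) :
    ⁅e, x⁆ ∈ Module.End.eigenspace (ad ℂ L h) (c + 2) := by
  rw [mem_V_iff] at hx ⊢
  rw [leibniz_lie, hhe, smul_lie, hx, lie_smul]
  module

lemma lie_f_mem (hhf : ⁅h, f⁆ = (-2 : ℂ) • f) {c : ℂ} {x : L}
    (hx : x ∈ Module.End.eigenspace (ad ℂ L h) c) :
    ⁅f, x⁆ ∈ Module.End.eigenspace (ad ℂ L h) (c - 2) := by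
  rw [mem_V_iff] at hx ⊢
  rw [leibniz_lie, hhf, smul_lie, hx, lie_smul]
  module

lemma ef_injective (hhe : ⁅h, e⁆ = (2 : ℂ) • e) (hef : ⁅e, f⁆ = h)
    {j : ℤ} (hj : 1 ≤ j) {v : L}
    (hv : v ∈ Module.End.eigenspace (ad ℂ L h) ((j : ℤ) : ℂ))
    (hv0 : ⁅e, ⁅f, v⁆⁆ = 0) : v = 0 := by
  by_contra hne
  set w : ℕ → L := fun k => ((ad ℂ L e) ^ k) v with hw
  have hwsucc : ∀ k : ℕ, w (k + 1) = ⁅e, w k⁆ := by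
    intro k
    simp only [hw, pow_succ', Module.End.mul_apply, ad_apply]
  have key : ∀ k : ℕ, w k ≠ 0 ∧ ⁅h, w k⁆ = ((j + 2 * k : ℤ) : ℂ) • w k ∧
      ⁅e, ⁅f, w k⁆⁆ = ((-(k * (j + k - 1)) : ℤ) : ℂ) • w k := by
    intro k
    induction k with
    | zero =>
      refine ⟨by simpa [hw] using hne, ?_, ?_⟩
      · simpa [hw] using mem_V_iff.mp hv
      · simpa [hw] using hv0
    | succ k ih =>
      obtain ⟨h1, h2, h3⟩ := ih
      have hfe : ⁅f, w (k + 1)⁆ = ((-((k + 1) * (j + k)) : ℤ) : ℂ) • w k := by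
        rw [hwsucc]
        have h4 := lie_lie f e (w k)
        have h5 : ⁅f, e⁆ = -h := by rw [← lie_skew, hef]
        rw [h5, neg_lie] at h4
        have h6 : ⁅f, ⁅e, w k⁆⁆ = -⁅h, w k⁆ + ⁅e, ⁅f, w k⁆⁆ := eq_add_of_sub_eq h4.symm
        rw [h6, h2, h3, ← neg_smul, ← add_smul]
        congr 1
        push_cast
        ring
      have hnz : ((-((k + 1) * (j + k)) : ℤ) : ℂ) ≠ 0 := by
        rw [Int.cast_ne_zero]
        have hk1 : (1 : ℤ) ≤ (k : ℤ) + 1 := by omega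
        have hjk : (1 : ℤ) ≤ j + k := by omega
        nlinarith
      refine ⟨?_, ?_, ?_⟩
      · intro h0
        rw [h0, lie_zero] at hfe
        exact h1 ((smul_eq_zero.mp hfe.symm).resolve_left hnz)
      · have hm := lie_e_mem hhe (mem_V_iff.mpr h2)
        have := mem_V_iff.mp hm
        rw [← hwsucc] at this
        rw [this]
        congr 1
        push_cast
        ring
      · rw [hfe, lie_smul, ← hwsucc]
        congr 1
        push_cast
        ring
  exact no_inf_eigen (ad ℂ L h) (fun k : ℕ => ((j + 2 * k : ℤ) : ℂ))
    (fun a b hab => by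
      have : (j + 2 * a : ℤ) = (j + 2 * b : ℤ) := Int.cast_injective hab
      omega) w
    (fun k => ⟨mem_V_iff.mpr (key k).2.1, (key k).1⟩)

lemma e_surjOn (hhe : ⁅h, e⁆ = (2 : ℂ) • e) (hhf : ⁅h, f⁆ = (-2 : ℂ) • f)
    (hef : ⁅e, f⁆ = h) {i : ℤ} (hi : 0 ≤ i) {y : L}
    (hy : y ∈ Module.End.eigenspace (ad ℂ L h) ((i + 2 : ℤ) : ℂ)) :
    ∃ x ∈ Module.End.eigenspace (ad ℂ L h) ((i : ℤ) : ℂ), ⁅e, x⁆ = y := by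
  set W := Module.End.eigenspace (ad ℂ L h) ((i + 2 : ℤ) : ℂ) with hW
  have hmaps : ∀ x ∈ W, ((ad ℂ L e) ∘ₗ (ad ℂ L f)) x ∈ W := by
    intro x hx
    have h1 : ⁅f, x⁆ ∈ Module.End.eigenspace (ad ℂ L h) (((i + 2 : ℤ) : ℂ) - 2) :=
      lie_f_mem hhf hx
    have h2 := lie_e_mem hhe h1
    simp only [LinearMap.coe_comp, Function.comp_apply, ad_apply]
    convert h2 using 2
    ring
  set T : W →ₗ[ℂ] W := ((ad ℂ L e) ∘ₗ (ad ℂ L f)).restrict hmaps with hT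
  have hker : LinearMap.ker T = ⊥ := by
    rw [eq_bot_iff]
    rintro ⟨x, hx⟩ hx0
    have hx0' : ⁅e, ⁅f, x⁆⁆ = 0 := by
      have := congrArg (Subtype.val) (LinearMap.mem_ker.mp hx0)
      simpa [hT, LinearMap.restrict_apply, ad_apply] using this
    have : x = 0 := ef_injective hhe hef (by omega : 1 ≤ i + 2) hx hx0'
    simpa using this
  have hsurj : Function.Surjective T :=
    LinearMap.injective_iff_surjective.mp (LinearMap.ker_eq_bot.mp hker)
  obtain ⟨y', hy'⟩ := hsurj ⟨y, hy⟩
  refine ⟨⁅f, (y' : L)⁆, ?_, ?_⟩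
  · have := lie_f_mem hhf y'.2
    convert this using 2
    push_cast
    ring
  · have := congrArg (Subtype.val) hy'
    simpa [hT, LinearMap.restrict_apply, ad_apply] using this

lemma dim_step (hhe : ⁅h, e⁆ = (2 : ℂ) • e) (hhf : ⁅h, f⁆ = (-2 : ℂ) • f)
    (hef : ⁅e, f⁆ = h) {i : ℤ} (hi : 0 ≤ i) :
    finrank ℂ ↥(Module.End.eigenspace (ad ℂ L h) ((i : ℤ) : ℂ)) =
      finrank ℂ ↥(LinearMap.ker (ad ℂ L e) ⊓
          Module.End.eigenspace (ad ℂ L h) ((i : ℤ) : ℂ)) +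
        finrank ℂ ↥(Module.End.eigenspace (ad ℂ L h) ((i + 2 : ℤ) : ℂ)) := by
  set V := Module.End.eigenspace (ad ℂ L h) ((i : ℤ) : ℂ) with hV
  set W := Module.End.eigenspace (ad ℂ L h) ((i + 2 : ℤ) : ℂ) with hW
  have hmaps : ∀ x ∈ V, (ad ℂ L e) x ∈ W := by
    intro x hx
    have h2 := lie_e_mem hhe hx
    rw [ad_apply]
    convert h2 using 2
    push_cast
    ring
  set φ : V →ₗ[ℂ] W := (ad ℂ L e).restrict hmaps with hφ
  have hr : LinearMap.range φ = ⊤ := by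
    rw [LinearMap.range_eq_top]
    rintro ⟨y, hy⟩
    obtain ⟨x, hx, hxe⟩ := e_surjOn hhe hhf hef hi hy
    exact ⟨⟨x, hx⟩, Subtype.ext (by simpa [hφ, LinearMap.restrict_apply, ad_apply] using hxe)⟩
  have h1 := LinearMap.finrank_range_add_finrank_ker φ
  rw [hr, finrank_top] at h1
  have hker : LinearMap.ker φ =
      Submodule.comap V.subtype (LinearMap.ker (ad ℂ L e) ⊓ V) := by
    ext x
    simp only [LinearMap.mem_ker, Submodule.mem_comap, Submodule.mem_inf,
      Submodule.coe_subtype, SetLike.coe_mem, and_true]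
    constructor
    · intro hx0
      have := congrArg (Subtype.val) hx0
      simpa [hφ, LinearMap.restrict_apply] using this
    · intro hx0
      exact Subtype.ext (by simpa [hφ, LinearMap.restrict_apply] using hx0)
  have h2 : finrank ℂ ↥(LinearMap.ker φ) = finrank ℂ ↥(LinearMap.ker (ad ℂ L e) ⊓ V) := by
    rw [hker]
    exact (Submodule.comapSubtypeEquivOfLe
      (inf_le_right : LinearMap.ker (ad ℂ L e) ⊓ V ≤ V)).finrank_eq
  omega

end Sl2DimAux

set_option maxHeartbeats 1000000 in
/-- For an sl2-triple `(h, e, f)` in a finite-dimensional complex Lie algebra,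
`dim 𝔤_i = Σ_{k ≥ 0} dim (𝔤^e ∩ 𝔤_{i+2k})` for every integer `i ≥ 0`; the sum is
finite since only finitely many eigenspaces of `ad h` are nonzero. -/
theorem sl2_dim_eigenspace_eq_sum_of_centralizer_dims
    (L : Type*) [LieRing L] [LieAlgebra ℂ L] [FiniteDimensional ℂ L]
    (h e f : L) (he : e ≠ 0)
    (hhe : ⁅h, e⁆ = (2 : ℂ) • e) (hhf : ⁅h, f⁆ = (-2 : ℂ) • f) (hef : ⁅e, f⁆ = h) :
    {j : ℤ | Module.End.eigenspace (LieAlgebra.ad ℂ L h) (j : ℂ) ≠ ⊥}.Finite ∧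
    (∀ i : ℤ, 0 ≤ i →
      Module.finrank ℂ ↥(Module.End.eigenspace (LieAlgebra.ad ℂ L h) (i : ℂ)) =
        ∑ᶠ k : ℕ, Module.finrank ℂ
          ↥(LinearMap.ker (LieAlgebra.ad ℂ L e) ⊓
            Module.End.eigenspace (LieAlgebra.ad ℂ L h) ((i + 2 * (k : ℤ)) : ℂ))) := by
  refine ⟨Sl2DimAux.int_eigen_finite _, ?_⟩
  intro i hi
  set c : ℤ → ℕ := fun j => Module.finrank ℂ
    ↥(LinearMap.ker (LieAlgebra.ad ℂ L e) ⊓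
      Module.End.eigenspace (LieAlgebra.ad ℂ L h) ((j : ℤ) : ℂ)) with hc
  obtain ⟨b, hb⟩ := (Sl2DimAux.int_eigen_finite (LieAlgebra.ad ℂ L h)).bddAbove
  set N : ℕ := (b + 1).toNat with hN0
  have hN : ∀ j : ℤ, (N : ℤ) ≤ j →
      Module.End.eigenspace (LieAlgebra.ad ℂ L h) (j : ℂ) = ⊥ := by
    intro j hj
    by_contra hbot
    have h1 : j ≤ b := hb hbot
    have h2 : (b + 1 : ℤ) ≤ ((b + 1).toNat : ℤ) := Int.self_le_toNat _
    omega
  have main : ∀ n : ℕ, ∀ i : ℤ, 0 ≤ i → (N : ℤ) ≤ i + 2 * n →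
      Module.finrank ℂ ↥(Module.End.eigenspace (LieAlgebra.ad ℂ L h) ((i : ℤ) : ℂ)) =
        ∑ k ∈ Finset.range n, c (i + 2 * k) := by
    intro n
    induction n with
    | zero =>
      intro i h0 hle
      rw [hN i (by omega)]
      simp
    | succ n ih =>
      intro i h0 hle
      rw [Sl2DimAux.dim_step hhe hhf hef h0,
        ih (i + 2) (by omega) (by push_cast at hle ⊢; omega)]
      rw [Finset.sum_range_succ']
      have harg : ∀ k : ℕ, c (i + 2 + 2 * k) = c (i + 2 * (k + 1 : ℕ)) := by
        intro k
        congr 1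
        push_cast
        ring
      rw [Finset.sum_congr rfl (fun k _ => harg k)]
      have hc0 : c (i + 2 * (0 : ℕ)) = c i := by norm_num
      rw [hc0, Nat.add_comm]
  have hsupp : (Function.support fun k : ℕ => c (i + 2 * k)) ⊆ ↑(Finset.range N) := by
    intro k hk
    simp only [Finset.coe_range, Set.mem_Iio]
    by_contra hkN
    push_neg at hkN
    have : Module.End.eigenspace (LieAlgebra.ad ℂ L h) (((i + 2 * (k : ℤ) : ℤ)) : ℂ) = ⊥ :=
      hN (i + 2 * (k : ℤ)) (by omega)
    apply hk
    show c (i + 2 * (k : ℤ)) = 0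
    simp only [hc]
    rw [this, inf_bot_eq]
    exact finrank_bot ℂ L
  calc Module.finrank ℂ ↥(Module.End.eigenspace (LieAlgebra.ad ℂ L h) (i : ℂ))
      = ∑ k ∈ Finset.range N, c (i + 2 * k) := main N i hi (by omega)
    _ = ∑ᶠ k : ℕ, c (i + 2 * k) := (finsum_eq_sum_of_support_subset _ hsupp).symm
    _ = ∑ᶠ k : ℕ, Module.finrank ℂ
          ↥(LinearMap.ker (LieAlgebra.ad ℂ L e) ⊓
            Module.End.eigenspace (LieAlgebra.ad ℂ L h) ((i : ℂ) + 2 * ((k : ℤ) : ℂ))) := by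
      apply finsum_congr
      intro k
      simp only [hc]
      have hcast : ((i + 2 * (k : ℤ) : ℤ) : ℂ) = (i : ℂ) + 2 * ((k : ℤ) : ℂ) := by
        push_cast
        ring
      rw [hcast]
end

section
/- Let 𝔤 be a finite-dimensional Lie algebra over ℂ and (h,e,f) an sl2-triple in 𝔤. For every integer i, the eigenspaces 𝔤_i and 𝔤_{−i} of ad(h) have the same dimension. -/
/-!
The adjoint actions of `e` and `f` shift the eigenvalues of `ad h` by `±2`, so in finite
dimension they are nilpotent and the Weyl automorphism `θ = exp (ad e) ∘ exp (ad (-f)) ∘ exp (ad e)`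
of `𝔤` exists. The `sl₂` relations give `θ h = -h`, hence `θ` conjugates `ad h` into `-ad h` and
maps `𝔤_c` isomorphically onto `𝔤_{-c}`.
-/

open LieAlgebra Module

attribute [local instance 100] LieRing.ofAssociativeRing

section Nilpotent

variable {K A : Type*} [Ring A]

theorem lie_pow_eq_smul_of_lie_eq_smul [CommRing K] [Algebra K A] {a x : A} {c : K}
    (h : ⁅a, x⁆ = c • x) (k : ℕ) : ⁅a, x ^ k⁆ = (k * c) • x ^ k := by
  induction k with
  | zero => simp [Ring.lie_def]
  | succ k ih =>
    calc ⁅a, x ^ (k + 1)⁆ = ⁅a, x ^ k⁆ * x + x ^ k * ⁅a, x⁆ := by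
          simp only [Ring.lie_def, pow_succ]; noncomm_ring
      _ = ((k + 1 : ℕ) * c) • x ^ (k + 1) := by
          rw [ih, h, smul_mul_assoc, mul_smul_comm, ← pow_succ, ← add_smul]
          push_cast; ring_nf

theorem isNilpotent_of_lie_eq_smul [Field K] [CharZero K] [Algebra K A] [FiniteDimensional K A]
    {a x : A} {c : K} (hc : c ≠ 0) (h : ⁅a, x⁆ = c • x) : IsNilpotent x := by
  by_contra hx
  have hev (k : ℕ) : (ad K A a).HasEigenvector (k * c) (x ^ k) :=
    ⟨End.mem_eigenspace_iff.mpr (lie_pow_eq_smul_of_lie_eq_smul h k), fun h0 => hx ⟨k, h0⟩⟩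
  have hinj : Function.Injective (fun k : ℕ => (k : K) * c) := fun _ _ hkl =>
    Nat.cast_injective (mul_right_cancel₀ hc hkl)
  have := (End.eigenvectors_linearIndependent' _ _ hinj _ hev).finite
  exact not_finite ℕ

end Nilpotent

namespace LieAlgebra

variable {K L : Type*} [LieRing L]

theorem isNilpotent_ad_of_lie_eq_smul [Field K] [CharZero K] [LieAlgebra K L]
    [FiniteDimensional K L] {h e : L} {c : K} (hc : c ≠ 0) (he : ⁅h, e⁆ = c • e) :
    IsNilpotent (ad K L e) :=
  isNilpotent_of_lie_eq_smul (a := ad K L h) hc (by rw [← LieHom.map_lie, he, map_smul])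

section Eigenspace

variable [CommRing K] [LieAlgebra K L] {θ : L ≃ₗ⁅K⁆ L} {h : L}

theorem apply_mem_eigenspace_ad_neg (hθ : θ h = -h) {c : K} {v : L}
    (hv : v ∈ End.eigenspace (ad K L h) c) : θ v ∈ End.eigenspace (ad K L h) (-c) := by
  rw [End.mem_eigenspace_iff, ad_apply] at hv ⊢
  rw [← neg_neg h, ← hθ, neg_lie, ← LieEquiv.map_lie, hv, map_smul, neg_smul]

theorem map_eigenspace_ad_eq_neg (hθ : θ h = -h) (c : K) :
    (End.eigenspace (ad K L h) c).map (θ.toLinearEquiv : L →ₗ[K] L) =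
      End.eigenspace (ad K L h) (-c) := by
  have hθ' : θ.symm h = -h := by rw [LieEquiv.symm_apply_eq, map_neg, hθ, neg_neg]
  refine le_antisymm ?_ fun v hv => ⟨θ.symm v, ?_, θ.apply_symm_apply v⟩
  · rintro _ ⟨v, hv, rfl⟩
    exact apply_mem_eigenspace_ad_neg hθ hv
  · simpa using apply_mem_eigenspace_ad_neg hθ' hv

theorem finrank_eigenspace_ad_neg (hθ : θ h = -h) (c : K) :
    finrank K (End.eigenspace (ad K L h) (-c)) = finrank K (End.eigenspace (ad K L h) c) := by
  rw [← map_eigenspace_ad_eq_neg hθ c, LinearEquiv.finrank_map_eq]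

end Eigenspace

section Exp

variable [CommRing K] [LieAlgebra K L] [LieAlgebra ℚ L]

noncomputable def expAd (x : L) (hx : IsNilpotent (ad K L x)) : L ≃ₗ⁅K⁆ L :=
  LieDerivation.exp (LieDerivation.ad K L x) (by rwa [LieDerivation.coe_ad_apply_eq_ad_apply])

theorem expAd_apply_of_lie_lie_lie_eq_zero {x y : L} (hx : IsNilpotent (ad K L x))
    (hy : ⁅x, ⁅x, ⁅x, y⁆⁆⁆ = 0) :
    expAd x hx y = y + ⁅x, y⁆ + (2⁻¹ : ℚ) • ⁅x, ⁅x, y⁆⁆ := by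
  have h3 : (ad K L x ^ 3) • y = 0 := by simpa [pow_succ] using hy
  rw [expAd, LieDerivation.exp_map_apply, LieDerivation.coe_ad_apply_eq_ad_apply,
    ← End.smul_def, IsNilpotent.exp_smul_eq_sum h3 hx]
  simp [Finset.sum_range_succ, sq]

noncomputable def weylAut {e f : L} (he : IsNilpotent (ad K L e))
    (hf : IsNilpotent (ad K L f)) : L ≃ₗ⁅K⁆ L :=
  (expAd e he).trans ((expAd (-f) (by simpa using hf.neg)).trans (expAd e he))

theorem weylAut_apply_eq_neg {h e f : L} (he : IsNilpotent (ad K L e))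
    (hf : IsNilpotent (ad K L f)) (hhe : ⁅h, e⁆ = (2 : K) • e) (hhf : ⁅h, f⁆ = (-2 : K) • f)
    (hef : ⁅e, f⁆ = h) : weylAut he hf h = -h := by
  have hf' : IsNilpotent (ad K L (-f)) := by simpa using hf.neg
  have heh : ⁅e, h⁆ = -((2 : K) • e) := by rw [← lie_skew, hhe]
  have hfh : ⁅-f, h⁆ = (-2 : K) • f := by rw [neg_lie, ← lie_skew, neg_neg, hhf]
  have hfe : ⁅-f, e⁆ = h := by rw [neg_lie, ← lie_skew, neg_neg, hef]
  have heeh : ⁅e, ⁅e, h⁆⁆ = 0 := by rw [heh, lie_neg, lie_smul, lie_self, smul_zero, neg_zero]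
  have hffh : ⁅-f, ⁅-f, h⁆⁆ = 0 := by rw [hfh, lie_smul, neg_lie, lie_self, neg_zero, smul_zero]
  have exp_e_h : expAd e he h = h - (2 : K) • e := by
    rw [expAd_apply_of_lie_lie_lie_eq_zero he (by rw [heeh, lie_zero]), heeh, heh]
    simp only [smul_zero, add_zero, sub_eq_add_neg]
  have exp_e_e : expAd e he e = e := by
    simpa using expAd_apply_of_lie_lie_lie_eq_zero he (y := e) (by simp)
  have exp_f_h : expAd (-f) hf' h = h - (2 : K) • f := by
    rw [expAd_apply_of_lie_lie_lie_eq_zero hf' (by rw [hffh, lie_zero]), hffh, hfh]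
    simp only [smul_zero, add_zero, neg_smul, sub_eq_add_neg]
  have exp_f_e : expAd (-f) hf' e = e + h - f := by
    have half : (2⁻¹ : ℚ) • (-2 : K) • f = -f := by
      rw [neg_smul, two_smul, ← two_smul ℚ, smul_neg, inv_smul_smul₀ two_ne_zero]
    rw [expAd_apply_of_lie_lie_lie_eq_zero hf' (by rw [hfe, hffh]), hfe, hfh, half,
      ← sub_eq_add_neg]
  simp only [weylAut, LieEquiv.trans_apply, exp_e_h, map_add, map_sub, map_smul, exp_f_h,
    exp_f_e, exp_e_e]
  module

end Exp

end LieAlgebra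

theorem sl2_dim_eigenspace_symmetric_general
    (L : Type*) [LieRing L] [LieAlgebra ℂ L] [FiniteDimensional ℂ L]
    (h e f : L)
    (hhe : ⁅h, e⁆ = (2 : ℂ) • e) (hhf : ⁅h, f⁆ = (-2 : ℂ) • f) (hef : ⁅e, f⁆ = h)
    (i : ℤ) :
    Module.finrank ℂ ↥(Module.End.eigenspace (LieAlgebra.ad ℂ L h) (i : ℂ)) =
      Module.finrank ℂ ↥(Module.End.eigenspace (LieAlgebra.ad ℂ L h) ((-i : ℤ) : ℂ)) := by
  -- `LieDerivation.exp` takes its series coefficients in `ℚ`.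
  let _ : LieAlgebra ℚ L :=
    { Module.compHom L (algebraMap ℚ ℂ) with lie_smul := fun q => lie_smul (algebraMap ℚ ℂ q) }
  have he := isNilpotent_ad_of_lie_eq_smul two_ne_zero hhe
  have hf := isNilpotent_ad_of_lie_eq_smul (neg_ne_zero.mpr two_ne_zero) hhf
  rw [Int.cast_neg, finrank_eigenspace_ad_neg (weylAut_apply_eq_neg he hf hhe hhf hef)]

/-- For an sl2-triple `(h, e, f)` in a finite-dimensional complex Lie algebra,
the eigenspaces `𝔤_i` and `𝔤_{-i}` of `ad h` have the same dimension. -/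
theorem sl2_dim_eigenspace_symmetric
    (L : Type*) [LieRing L] [LieAlgebra ℂ L] [FiniteDimensional ℂ L]
    (h e f : L) (he : e ≠ 0)
    (hhe : ⁅h, e⁆ = (2 : ℂ) • e) (hhf : ⁅h, f⁆ = (-2 : ℂ) • f) (hef : ⁅e, f⁆ = h)
    (i : ℤ) :
    Module.finrank ℂ ↥(Module.End.eigenspace (LieAlgebra.ad ℂ L h) (i : ℂ)) =
      Module.finrank ℂ ↥(Module.End.eigenspace (LieAlgebra.ad ℂ L h) ((-i : ℤ) : ℂ)) :=
  sl2_dim_eigenspace_symmetric_general L h e f hhe hhf hef i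
end

section
/- Let k be a field, r a natural number, and A a commutative k-algebra equipped with a grading A = ⊕_{λ ∈ ℕ^r} A_λ by the additive monoid ℕ^r (so A_λ · A_μ ⊆ A_{λ+μ} and 1 ∈ A_0). If A is finitely generated as a k-algebra, then the homogeneous component A_0 is finite-dimensional over k if and only if every homogeneous component A_λ, λ ∈ ℕ^r, is finite-dimensional over k. -/
open DirectSum Pointwise

/-- For a finitely generated commutative `k`-algebra `A` graded by the monoid `ℕ^r`,
the degree-zero component is finite-dimensional over `k` if and only if every
homogeneous component is finite-dimensional over `k`. -/
theorem gradedAlgebra_finiteType_degree_zero_finiteDimensional_iff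
    (k : Type*) [Field k] (r : ℕ)
    (A : Type*) [CommRing A] [Algebra k A]
    (𝒜 : (Fin r → ℕ) → Submodule k A) [GradedAlgebra 𝒜]
    (hfg : Algebra.FiniteType k A) :
    FiniteDimensional k ↥(𝒜 0) ↔ ∀ lam : Fin r → ℕ, FiniteDimensional k ↥(𝒜 lam) := by
  classical
  constructor
  · intro h0 lam
    obtain ⟨S, hS⟩ := hfg.out
    -- the finite set of degrees appearing in decompositions of generators
    set Λ : Finset (Fin r → ℕ) := S.sup (fun s => (decompose 𝒜 s).support) with hΛ
    -- homogeneous components of generators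
    set G : A × (Fin r → ℕ) → A := fun p => (decompose 𝒜 p.1 p.2 : A) with hG
    have hGmem : ∀ p : A × (Fin r → ℕ), G p ∈ 𝒜 p.2 := fun p => (decompose 𝒜 p.1 p.2).2
    -- positive-degree generator index set
    set Ip : Finset (A × (Fin r → ℕ)) := (S ×ˢ Λ).filter (fun p => p.2 ≠ 0) with hι
    -- monomials in positive-degree generators
    set mon : ((↥Ip) → ℕ) → A := fun e => ∏ p : ↥Ip, G p.1 ^ e p with hmon
    set Exp : (Fin r → ℕ) → Set ((↥Ip) → ℕ) :=
      fun μ => {e | ∑ p : ↥Ip, e p • (p.1.2) = μ} with hExp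
    -- each exponent set is finite
    have hExp_fin : ∀ μ, (Exp μ).Finite := by
      intro μ
      set B : ℕ := Finset.univ.sup μ with hB
      have hsub : Exp μ ⊆ Set.pi Set.univ (fun _ => Set.Iic B) := by
        intro e he p _
        obtain ⟨i, hi⟩ : ∃ i, 0 < p.1.2 i := by
          by_contra h
          push_neg at h
          have : p.1.2 = 0 := funext fun i => Nat.le_zero.1 (h i)
          exact (Finset.mem_filter.1 p.2).2 this
        have h1 : e p ≤ e p * p.1.2 i := Nat.le_mul_of_pos_right _ hi
        have h2 : e p * p.1.2 i ≤ ∑ q : ↥Ip, e q * q.1.2 i :=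
          Finset.single_le_sum (f := fun q : ↥Ip => e q * q.1.2 i)
            (fun _ _ => Nat.zero_le _) (Finset.mem_univ p)
        have h3 : ∑ q : ↥Ip, e q * q.1.2 i = μ i := by
          have := congrFun he i
          simpa using this
        exact le_trans (le_trans h1 (h2.trans h3.le)) (Finset.le_sup (Finset.mem_univ i))
      exact Set.Finite.subset (Set.Finite.pi fun _ => Set.finite_Iic B) hsub
    -- monomial arithmetic
    have hmon_add : ∀ e f, mon (e + f) = mon e * mon f := by
      intro e f
      simp only [hmon, Pi.add_apply, pow_add, Finset.prod_mul_distrib]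
    have hExp_add : ∀ {μ ν : Fin r → ℕ} {e f}, e ∈ Exp μ → f ∈ Exp ν → e + f ∈ Exp (μ + ν) := by
      intro μ ν e f he hf
      simp only [hExp, Set.mem_setOf_eq] at he hf ⊢
      rw [← he, ← hf, ← Finset.sum_add_distrib]
      exact Finset.sum_congr rfl fun q _ => by rw [Pi.add_apply, add_smul]
    -- the candidate "finitely many monomials over A₀" submodules
    set W : (Fin r → ℕ) → Submodule k A :=
      fun μ => Submodule.span k ((𝒜 0 : Set A) * (mon '' Exp μ)) with hW
    have hWmem : ∀ {μ : Fin r → ℕ} {a e}, a ∈ 𝒜 0 → e ∈ Exp μ → a * mon e ∈ W μ :=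
      fun {μ a e} ha he => Submodule.subset_span (Set.mul_mem_mul ha ⟨e, he, rfl⟩)
    have hW0 : ∀ {a : A}, a ∈ 𝒜 0 → a ∈ W 0 := by
      intro a ha
      have h1 : (0 : (↥Ip) → ℕ) ∈ Exp 0 := by
        simp only [hExp, Set.mem_setOf_eq, Pi.zero_apply, zero_smul, Finset.sum_const_zero]
      have := hWmem ha h1
      simpa [hmon] using this
    have hmul : ∀ μ ν, W μ * W ν ≤ W (μ + ν) := by
      intro μ ν
      rw [hW, Submodule.span_mul_span]
      refine Submodule.span_mono ?_
      intro z hz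
      rw [Set.mem_mul] at hz
      obtain ⟨x, hx, y, hy, rfl⟩ := hz
      rw [Set.mem_mul] at hx hy
      obtain ⟨a, ha, m, hm, rfl⟩ := hx
      obtain ⟨b, hb, n, hn, rfl⟩ := hy
      obtain ⟨e, he, rfl⟩ := hm
      obtain ⟨f, hf, rfl⟩ := hn
      have hab : a * b ∈ 𝒜 0 := by
        have := SetLike.mul_mem_graded ha hb
        simpa using this
      refine ⟨a * b, hab, mon (e + f), ⟨e + f, hExp_add he hf, rfl⟩, ?_⟩
      rw [hmon_add]; ring
    -- the generating set of homogeneous components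
    set T : Set A := Set.image2 (fun s μ => (decompose 𝒜 s μ : A)) ↑S ↑Λ with hT
    have hTtop : Algebra.adjoin k T = ⊤ := by
      rw [eq_top_iff, ← hS]
      refine Algebra.adjoin_le ?_
      intro s hs
      have hsupp : (decompose 𝒜 s).support ⊆ Λ := Finset.le_sup (f := fun s => (decompose 𝒜 s).support) (Finset.mem_coe.1 hs)
      have hsum : ∑ μ ∈ Λ, (decompose 𝒜 s μ : A) = s := by
        conv_rhs => rw [← DirectSum.sum_support_decompose 𝒜 s]
        exact (Finset.sum_subset hsupp (fun μ _ hμ => by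
          rw [DFinsupp.notMem_support_iff.1 hμ]; rfl)).symm
      rw [← hsum]
      exact Subalgebra.sum_mem _ fun μ hμ =>
        Algebra.subset_adjoin (Set.mem_image2_of_mem hs (Finset.mem_coe.2 hμ))
    -- homogeneous elements of degree 0 have all components in W
    have hcomp0 : ∀ {x : A}, x ∈ 𝒜 0 → ∀ μ, (decompose 𝒜 x μ : A) ∈ W μ := by
      intro x hx μ
      rcases eq_or_ne (0 : Fin r → ℕ) μ with h | h
      · rw [← h, decompose_of_mem_same 𝒜 hx]
        exact hW0 hx
      · rw [decompose_of_mem_ne 𝒜 hx h]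
        exact (W μ).zero_mem
    -- key claim: every component of every element lies in W
    have key : ∀ a : A, ∀ μ, (decompose 𝒜 a μ : A) ∈ W μ := by
      intro a
      have ha : a ∈ Algebra.adjoin k T := by rw [hTtop]; trivial
      induction ha using Algebra.adjoin_induction with
      | mem x hx =>
        obtain ⟨s, hs, ν, hν, rfl⟩ := hx
        intro μ
        have hxν : (decompose 𝒜 s ν : A) ∈ 𝒜 ν := (decompose 𝒜 s ν).2
        rcases eq_or_ne ν μ with rfl | h
        · rw [decompose_of_mem_same 𝒜 hxν]
          rcases eq_or_ne ν 0 with rfl | hν0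
          · exact hW0 hxν
          · -- positive degree generator: it is `1 * mon (single)`
            have hp : (s, ν) ∈ Ip := Finset.mem_filter.2 ⟨Finset.mem_product.2 ⟨hs, hν⟩, hν0⟩
            set e : (↥Ip) → ℕ := Pi.single (⟨(s, ν), hp⟩ : ↥Ip) 1 with he
            have hmon_e : mon e = (decompose 𝒜 s ν : A) := by
              simp only [hmon]
              rw [Finset.prod_eq_single (⟨(s, ν), hp⟩ : ↥Ip)]
              · simp [he, hG]
              · intro q _ hq
                rw [he, Pi.single_eq_of_ne hq, pow_zero]
              · intro h; exact absurd (Finset.mem_univ _) h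
            have hee : e ∈ Exp ν := by
              simp only [hExp, Set.mem_setOf_eq]
              rw [Finset.sum_eq_single (⟨(s, ν), hp⟩ : ↥Ip)]
              · simp [he]
              · intro q _ hq
                rw [he, Pi.single_eq_of_ne hq, zero_smul]
              · intro h; exact absurd (Finset.mem_univ _) h
            have := hWmem (SetLike.one_mem_graded 𝒜) hee
            rwa [one_mul, hmon_e] at this
        · rw [decompose_of_mem_ne 𝒜 hxν h]
          exact (W μ).zero_mem
      | algebraMap c =>
        exact hcomp0 (SetLike.algebraMap_mem_graded 𝒜 c)
      | add x y hx hy ihx ihy =>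
        intro μ
        rw [DirectSum.decompose_add]
        have : (decompose 𝒜 x μ + decompose 𝒜 y μ : A) ∈ W μ := add_mem (ihx μ) (ihy μ)
        simpa using this
      | mul x y hx hy ihx ihy =>
        intro μ
        have hdm : (decompose 𝒜 (x * y) μ : A) =
            ∑ ij ∈ ((decompose 𝒜 x).support ×ˢ (decompose 𝒜 y).support).filter
              (fun ij : (Fin r → ℕ) × (Fin r → ℕ) => ij.1 + ij.2 = μ),
              ((decompose 𝒜 x ij.1 : A) * (decompose 𝒜 y ij.2 : A)) := by
          rw [DirectSum.decompose_mul]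
          exact DirectSum.coe_mul_apply 𝒜 _ _ μ
        rw [hdm]
        refine Submodule.sum_mem _ ?_
        rintro ⟨i, j⟩ hij
        obtain ⟨-, hadd⟩ := Finset.mem_filter.1 hij
        have : (decompose 𝒜 x i : A) * (decompose 𝒜 y j : A) ∈ W i * W j :=
          Submodule.mul_mem_mul (ihx i) (ihy j)
        have := hmul i j this
        rwa [hadd] at this
    -- conclude: 𝒜 lam ≤ W lam, and W lam is finite-dimensional
    have hle : 𝒜 lam ≤ W lam := by
      intro a ha
      have := key a lam
      rwa [decompose_of_mem_same 𝒜 ha] at this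
    set F : Finset A := ((hExp_fin lam).image mon).toFinset with hF
    have hWle : W lam ≤ F.sup (fun m => (𝒜 0).map (LinearMap.mulRight k m)) := by
      rw [hW]
      rw [Submodule.span_le]
      intro z hz
      rw [Set.mem_mul] at hz
      obtain ⟨a, ha, m, hm, rfl⟩ := hz
      have hmF : m ∈ F := by
        rw [hF, Set.Finite.mem_toFinset]
        exact hm
      have : a * m ∈ (𝒜 0).map (LinearMap.mulRight k m) := ⟨a, ha, rfl⟩
      exact SetLike.le_def.1 (Finset.le_sup (f := fun m => (𝒜 0).map (LinearMap.mulRight k m)) hmF) this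
    have : FiniteDimensional k ↥(F.sup (fun m => (𝒜 0).map (LinearMap.mulRight k m))) := by
      infer_instance
    exact Submodule.finiteDimensional_of_le (hle.trans hWle)
  · intro h
    exact h 0
end

section
/- Let V be a vector space over a field k and f : V → V a linear endomorphism which is locally nilpotent, i.e., for every v ∈ V there exists n ∈ ℕ with f^n(v) = 0. Then the rank (dimension, as a cardinal) of the cokernel V/f(V) is at most the rank of the kernel of f. In particular, if ker f is finite-dimensional then coker f is finite-dimensional of dimension at most dim ker f. -/
/-!
Let `κ = rank (ker f)`. Since `ker f^(n+1)` is the preimage of `ker f^n` under `f`,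
`rank (ker f^n) ≤ n * κ`, and local nilpotence says `V = ⋃ n, ker f^n`.

If `κ` is infinite, this already gives `rank V ≤ ℵ₀ * κ = κ`. If `κ` is finite, each `ker f^n`
is a finite-dimensional `f`-invariant subspace, on which `f` has index zero; so its image in
`V ⧸ range f` has dimension at most `dim (ker f)`, and these images form an increasing chain
exhausting the cokernel.
-/

open Cardinal Module LinearMap Submodule DirectSum

universe u v w

variable {K : Type u} {V : Type v} [DivisionRing K] [AddCommGroup V] [Module K V]

theorem rank_le_of_iSup_eq_top_of_directed {ι : Type*} [Nonempty ι] {p : ι → Submodule K V}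
    (hdir : Directed (· ≤ ·) p) (htop : ⨆ i, p i = ⊤) {n : ℕ}
    (hp : ∀ i, Module.rank K (p i) ≤ n) : Module.rank K V ≤ n := by
  classical
  refine rank_le fun s hs => ?_
  have hmem (x : V) : ∃ i, x ∈ p i := (mem_iSup_of_directed p hdir).mp (htop ▸ mem_top)
  choose i hi using hmem
  obtain ⟨j, hj⟩ := hdir.finset_le (s.image i)
  have hsj (x : s) : (x : V) ∈ p j := hj _ (Finset.mem_image_of_mem i x.2) (hi x)
  have hli : LinearIndependent K fun x : s => (⟨x, hsj x⟩ : p j) :=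
    .of_comp (p j).subtype hs
  have hcard := hli.cardinal_le_rank.trans (hp j)
  rwa [mk_coe_finset, Nat.cast_le] at hcard

theorem rank_le_of_iSup_eq_top_of_countable {ι : Type w} [Countable ι] {p : ι → Submodule K V}
    (htop : ⨆ i, p i = ⊤) {κ : Cardinal} (hκ : ℵ₀ ≤ κ)
    (hp : ∀ i, Module.rank K (p i) ≤ κ) : Module.rank K V ≤ κ := by
  classical
  rw [← lift_le.{w}]
  calc lift.{w} (Module.rank K V)
      = lift.{w} (Module.rank K (range (DFinsupp.lsum ℕ fun i => (p i).subtype))) := by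
        rw [← iSup_eq_range_dfinsupp_lsum, htop, rank_top]
    _ ≤ Module.rank K (⨁ i, p i) := by
        have h := lift_rank_range_le (DFinsupp.lsum ℕ fun i => (p i).subtype)
        rwa [lift_umax.{v, w}, lift_id'.{v, w}] at h
    _ = sum fun i => Module.rank K (p i) := rank_directSum K _
    _ ≤ sum fun _ => κ := sum_le_sum _ _ hp
    _ = lift #ι * lift κ := sum_const _ _
    _ ≤ ℵ₀ * lift κ := by gcongr; simp
    _ = lift κ := aleph0_mul_eq (by simpa using hκ)

namespace Module.End

def IsLocallyNilpotent {R M : Type*} [Semiring R] [AddCommMonoid M] [Module R M]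
    (f : End R M) : Prop :=
  ∀ v : M, ∃ n : ℕ, (f ^ n) v = 0

theorem IsLocallyNilpotent.iSup_ker_pow_eq_top {R M : Type*} [Semiring R] [AddCommMonoid M]
    [Module R M] {f : End R M} (hf : f.IsLocallyNilpotent) : ⨆ n, ker (f ^ n) = ⊤ :=
  eq_top_iff'.mpr fun v => (hf v).elim fun n hn => mem_iSup_of_mem n hn

theorem mapsTo_ker_pow {R M : Type*} [Semiring R] [AddCommMonoid M] [Module R M]
    (f : End R M) (n : ℕ) : ∀ x ∈ ker (f ^ n), f x ∈ ker (f ^ n) := by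
  intro x hx
  rw [mem_ker, ← mul_apply, ← pow_succ, pow_succ', mul_apply, mem_ker.mp hx, map_zero]

theorem rank_ker_pow_le (f : End K V) (n : ℕ) :
    Module.rank K (ker (f ^ n)) ≤ n * Module.rank K (ker f) := by
  induction n with
  | zero => simp [one_eq_id]
  | succ n ih =>
    have hcomap : ker (f ^ (n + 1)) = (ker (f ^ n)).comap f := by
      rw [pow_succ, mul_eq_comp, ker_comp]
    calc Module.rank K (ker (f ^ (n + 1)))
        ≤ Module.rank K (ker (f ^ n)) + Module.rank K (ker f) := by
          rw [hcomap]; simpa using lift_rank_comap_le (f := f) (ker (f ^ n))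
      _ ≤ (n + 1 : ℕ) * Module.rank K (ker f) := by
          grw [ih]; push_cast; rw [add_one_mul]

theorem finrank_quotient_range_eq_finrank_ker [FiniteDimensional K V] (f : End K V) :
    finrank K (V ⧸ range f) = finrank K (ker f) := by
  have hindex := index_eq_of_finiteDimensional (f := f)
  rwa [sub_self, index_eq_finrank_sub, sub_eq_zero, Nat.cast_inj, eq_comm] at hindex

theorem rank_map_mkQ_range_le {f : End K V} {W : Submodule K V} [FiniteDimensional K W]
    (hW : ∀ x ∈ W, f x ∈ W) :
    Module.rank K (W.map (range f).mkQ) ≤ Module.rank K (ker f) := by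
  set g := f.restrict hW
  set q := (range f).mkQ ∘ₗ W.subtype
  have hgq : range g ≤ ker q := by
    rintro _ ⟨x, rfl⟩
    simp [q, g]
  have hker : Module.rank K (ker g) ≤ Module.rank K (ker f) := by
    rw [← rank_map_eq (injective_subtype W)]
    refine Submodule.rank_mono ?_
    rintro _ ⟨x, hx, rfl⟩
    simpa [g, Subtype.ext_iff] using hx
  calc Module.rank K (W.map (range f).mkQ)
      = Module.rank K (range ((range g).liftQ q hgq)) := by
        rw [range_liftQ, range_comp, range_subtype]
    _ ≤ Module.rank K (W ⧸ range g) := rank_range_le _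
    _ = Module.rank K (ker g) := by
        rw [← finrank_eq_rank, ← finrank_eq_rank, finrank_quotient_range_eq_finrank_ker g]
    _ ≤ Module.rank K (ker f) := hker

theorem IsLocallyNilpotent.rank_le_rank_ker_of_aleph0_le {f : End K V}
    (hf : f.IsLocallyNilpotent) (hκ : ℵ₀ ≤ Module.rank K (ker f)) :
    Module.rank K V ≤ Module.rank K (ker f) :=
  rank_le_of_iSup_eq_top_of_countable hf.iSup_ker_pow_eq_top hκ fun n =>
    (rank_ker_pow_le f n).trans <| (mul_le_max_of_aleph0_le_right hκ).trans <|
      max_le (natCast_le_aleph0.trans hκ) le_rfl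

theorem IsLocallyNilpotent.rank_quotient_range_le_rank_ker {f : End K V}
    [FiniteDimensional K (ker f)] (hf : f.IsLocallyNilpotent) :
    Module.rank K (V ⧸ range f) ≤ Module.rank K (ker f) := by
  rw [← finrank_eq_rank K (ker f)]
  refine rank_le_of_iSup_eq_top_of_directed (p := fun n => (ker (f ^ n)).map (range f).mkQ)
    (Monotone.directed_le fun m n hmn => map_mono (f.iterateKer.monotone hmn)) ?_ fun n => ?_
  · rw [← Submodule.map_iSup, hf.iSup_ker_pow_eq_top, Submodule.map_top, range_mkQ]
  · have : FiniteDimensional K (ker (f ^ n)) := rank_lt_aleph0_iff.mp <|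
      (rank_ker_pow_le f n).trans_lt (mul_lt_aleph0 natCast_lt_aleph0 (rank_lt_aleph0 K _))
    rw [finrank_eq_rank]
    exact rank_map_mkQ_range_le (f.mapsTo_ker_pow n)

end Module.End

/-- If `f` is a locally nilpotent endomorphism of a vector space `V`, then the rank of
the cokernel `V ⧸ range f` is at most the rank of `ker f`; in particular if `ker f` is
finite-dimensional then so is the cokernel, with dimension at most `dim ker f`. -/
theorem locallyNilpotent_rank_coker_le_rank_ker
    (k : Type*) [Field k] (V : Type*) [AddCommGroup V] [Module k V]
    (f : Module.End k V) (hf : ∀ v : V, ∃ n : ℕ, (f ^ n) v = 0) :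
    Module.rank k (V ⧸ LinearMap.range f) ≤ Module.rank k ↥(LinearMap.ker f) ∧
    (FiniteDimensional k ↥(LinearMap.ker f) →
      FiniteDimensional k (V ⧸ LinearMap.range f) ∧
      Module.finrank k (V ⧸ LinearMap.range f) ≤
        Module.finrank k ↥(LinearMap.ker f)) := by
  have hrank : Module.rank k (V ⧸ range f) ≤ Module.rank k (ker f) := by
    rcases lt_or_ge (Module.rank k (ker f)) ℵ₀ with hfin | hinf
    · have := rank_lt_aleph0_iff.mp hfin
      exact Module.End.IsLocallyNilpotent.rank_quotient_range_le_rank_ker hf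
    · exact (rank_quotient_le _).trans
        (Module.End.IsLocallyNilpotent.rank_le_rank_ker_of_aleph0_le hf hinf)
  refine ⟨hrank, fun _ => ?_⟩
  have hfin : FiniteDimensional k (V ⧸ range f) :=
    rank_lt_aleph0_iff.mp (hrank.trans_lt (rank_lt_aleph0 k _))
  exact ⟨hfin, finrank_le_of_rank_le (hrank.trans_eq (finrank_eq_rank k _).symm)⟩
end
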